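/- For the 9-dimensional quiver algebra A with relations δ² = γ³ = αβ, δγ = γδ = 0, δα = γα = 0, βδ = βγ = 0, the socle of A (as a two-sided A-module) has k-basis {αβ, βα}. -/

import Mathlib

/-! The 9-dimensional algebra `A` given by the quiver with vertices `i, j`, arrows
`α : i → j`, `β : j → i`, and loops `γ, δ` at `i`, with relations
`δ² = γ³ = αβ`, `δγ = γδ = 0`, `δα = γα = 0`, `βδ = βγ = 0`.
Paths compose left-to-right, so the product `x * y` means "first `x`, then `y`";
in particular `α * β` is a loop at `i` and `β * α` is a loop at `j`.
We realise `A` as the quotient of the free algebra on the six generators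
`e_i, e_j, α, β, γ, δ` by the path-algebra relations together with the quiver relations. -/

open FreeAlgebra

/-- The defining relations of the quiver algebra: generator `0` is the vertex idempotent
`e_i`, `1` is `e_j`, `2` is `α : i → j`, `3` is `β : j → i`, `4` is the loop `γ` at `i`,
and `5` is the loop `δ` at `i`. -/
inductive QuiverRel (k : Type*) [Field k] :
    FreeAlgebra k (Fin 6) → FreeAlgebra k (Fin 6) → Prop
  | idem_i : QuiverRel k (ι k 0 * ι k 0) (ι k 0)
  | idem_j : QuiverRel k (ι k 1 * ι k 1) (ι k 1)
  | orth_ij : QuiverRel k (ι k 0 * ι k 1) 0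
  | orth_ji : QuiverRel k (ι k 1 * ι k 0) 0
  | sum_idem : QuiverRel k (ι k 0 + ι k 1) 1
  | alpha_src : QuiverRel k (ι k 0 * ι k 2) (ι k 2)   -- α starts at i
  | alpha_tgt : QuiverRel k (ι k 2 * ι k 1) (ι k 2)   -- α ends at j
  | beta_src : QuiverRel k (ι k 1 * ι k 3) (ι k 3)    -- β starts at j
  | beta_tgt : QuiverRel k (ι k 3 * ι k 0) (ι k 3)    -- β ends at i
  | gamma_src : QuiverRel k (ι k 0 * ι k 4) (ι k 4)
  | gamma_tgt : QuiverRel k (ι k 4 * ι k 0) (ι k 4)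
  | delta_src : QuiverRel k (ι k 0 * ι k 5) (ι k 5)
  | delta_tgt : QuiverRel k (ι k 5 * ι k 0) (ι k 5)
  | delta_sq : QuiverRel k (ι k 5 * ι k 5) (ι k 2 * ι k 3)        -- δ² = αβ
  | gamma_cube : QuiverRel k (ι k 4 * (ι k 4 * ι k 4)) (ι k 2 * ι k 3)  -- γ³ = αβ
  | delta_gamma : QuiverRel k (ι k 5 * ι k 4) 0
  | gamma_delta : QuiverRel k (ι k 4 * ι k 5) 0
  | delta_alpha : QuiverRel k (ι k 5 * ι k 2) 0
  | gamma_alpha : QuiverRel k (ι k 4 * ι k 2) 0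
  | beta_delta : QuiverRel k (ι k 3 * ι k 5) 0
  | beta_gamma : QuiverRel k (ι k 3 * ι k 4) 0

variable (k : Type*) [Field k]

/-- The 9-dimensional quiver algebra `A`. -/
abbrev QuiverAlg := RingQuot (QuiverRel k)

/-- The vertex idempotent `i`. -/
noncomputable def qi : QuiverAlg k := RingQuot.mkAlgHom k (QuiverRel k) (ι k 0)
/-- The vertex idempotent `j`. -/
noncomputable def qj : QuiverAlg k := RingQuot.mkAlgHom k (QuiverRel k) (ι k 1)
/-- The arrow `α : i → j`. -/
noncomputable def qα : QuiverAlg k := RingQuot.mkAlgHom k (QuiverRel k) (ι k 2)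
/-- The arrow `β : j → i`. -/
noncomputable def qβ : QuiverAlg k := RingQuot.mkAlgHom k (QuiverRel k) (ι k 3)
/-- The loop `γ` at `i`. -/
noncomputable def qγ : QuiverAlg k := RingQuot.mkAlgHom k (QuiverRel k) (ι k 4)
/-- The loop `δ` at `i`. -/
noncomputable def qδ : QuiverAlg k := RingQuot.mkAlgHom k (QuiverRel k) (ι k 5)

/-- The standard basis vector `{i, j, α, β, βα, γ, γ², δ, δ²}` of `A`. -/
noncomputable def qbasisVec : Fin 9 → QuiverAlg k :=
  ![qi k, qj k, qα k, qβ k, qβ k * qα k, qγ k, qγ k ^ 2, qδ k, qδ k ^ 2]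

/-- The (left) socle of `A`: the annihilator `{a | J(A)·a = 0}` of the Jacobson radical,
as a `k`-submodule of `A`. -/
noncomputable def qsoc : Submodule k (QuiverAlg k) where
  carrier := {a | ∀ x ∈ (⊥ : Ideal (QuiverAlg k)).jacobson, x * a = 0}
  add_mem' := by
    intro a b ha hb x hx
    rw [mul_add, ha x hx, hb x hx, add_zero]
  zero_mem' := by
    intro x hx
    rw [mul_zero]
  smul_mem' := by
    intro c a ha x hx
    rw [mul_smul_comm, ha x hx, smul_zero]


/-!
The nine paths `e_i, e_j, α, β, βα, γ, γ², δ, δ²` (where `δ² = γ³ = αβ`) form a basis of `A`.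
They span, because their span contains `1` and is stable under left multiplication by the
generators. They are independent, because the matrices of left multiplication on them satisfy the
defining relations, hence define a representation of `A`, in which the matrix of the `p`-th path
maps the coordinate vector of `1` to the `p`-th standard basis vector of `k⁹`. Every product of
basis vectors can then be read off these matrices.

The Jacobson radical `J` is the span of the paths of positive length: it lies in the kernels of
the two vertex characters `A → k`, and conversely that span is an ideal whose elements satisfy
`z⁴ = 0`. Both `βα` and `δ² = αβ` are killed by every path of positive length. Conversely, the
arrows `α, β, γ, δ` lie in `J`, and an element killed by all four of them has no coordinate outside
`βα` and `δ²`.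
-/

theorem mul_eq_zero_of_mul_eq_self_left {M : Type*} [SemigroupWithZero M] {x m y : M}
    (hx : x * m = x) (h : m * y = 0) : x * y = 0 := by
  rw [← hx, mul_assoc, h, mul_zero]

theorem mul_eq_zero_of_mul_eq_self_right {M : Type*} [SemigroupWithZero M] {x m y : M}
    (hy : m * y = y) (h : x * m = 0) : x * y = 0 := by
  rw [← hy, ← mul_assoc, h, zero_mul]

theorem AlgHom.jacobson_bot_le_ker {K A : Type*} [Field K] [Ring A] [Algebra K A]
    (f : A →ₐ[K] K) : Ideal.jacobson (⊥ : Ideal A) ≤ RingHom.ker f :=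
  sInf_le ⟨bot_le, RingHom.ker_isMaximal_of_surjective f fun c => ⟨algebraMap K A c, f.commutes c⟩⟩

theorem Ideal.mem_jacobson_bot_of_forall_isNilpotent_mul {R : Type*} [Ring R] {x : R}
    (h : ∀ y, IsNilpotent (y * x)) : x ∈ Ideal.jacobson (⊥ : Ideal R) := by
  refine Ideal.mem_jacobson_iff.2 fun y => ⟨↑(h y).isUnit_add_one.unit⁻¹, ?_⟩
  rw [Ideal.mem_bot, mul_assoc, ← mul_add_one, (h y).isUnit_add_one.val_inv_mul, sub_self]

open scoped Matrix

namespace QuiverAlg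

theorem mkAlgHom_ι (n : Fin 6) :
    RingQuot.mkAlgHom k (QuiverRel k) (ι k n) = ![qi k, qj k, qα k, qβ k, qγ k, qδ k] n := by
  fin_cases n <;> rfl

theorem qi_mul_qi : qi k * qi k = qi k := by
  simpa [mkAlgHom_ι] using RingQuot.mkAlgHom_rel k (QuiverRel.idem_i (k := k))
theorem qj_mul_qj : qj k * qj k = qj k := by
  simpa [mkAlgHom_ι] using RingQuot.mkAlgHom_rel k (QuiverRel.idem_j (k := k))
theorem qi_mul_qj : qi k * qj k = 0 := by
  simpa [mkAlgHom_ι] using RingQuot.mkAlgHom_rel k (QuiverRel.orth_ij (k := k))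
theorem qj_mul_qi : qj k * qi k = 0 := by
  simpa [mkAlgHom_ι] using RingQuot.mkAlgHom_rel k (QuiverRel.orth_ji (k := k))
theorem qi_add_qj : qi k + qj k = 1 := by
  simpa [mkAlgHom_ι] using RingQuot.mkAlgHom_rel k (QuiverRel.sum_idem (k := k))
theorem qi_mul_qα : qi k * qα k = qα k := by
  simpa [mkAlgHom_ι] using RingQuot.mkAlgHom_rel k (QuiverRel.alpha_src (k := k))
theorem qα_mul_qj : qα k * qj k = qα k := by
  simpa [mkAlgHom_ι] using RingQuot.mkAlgHom_rel k (QuiverRel.alpha_tgt (k := k))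
theorem qj_mul_qβ : qj k * qβ k = qβ k := by
  simpa [mkAlgHom_ι] using RingQuot.mkAlgHom_rel k (QuiverRel.beta_src (k := k))
theorem qβ_mul_qi : qβ k * qi k = qβ k := by
  simpa [mkAlgHom_ι] using RingQuot.mkAlgHom_rel k (QuiverRel.beta_tgt (k := k))
theorem qi_mul_qγ : qi k * qγ k = qγ k := by
  simpa [mkAlgHom_ι] using RingQuot.mkAlgHom_rel k (QuiverRel.gamma_src (k := k))
theorem qγ_mul_qi : qγ k * qi k = qγ k := by
  simpa [mkAlgHom_ι] using RingQuot.mkAlgHom_rel k (QuiverRel.gamma_tgt (k := k))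
theorem qi_mul_qδ : qi k * qδ k = qδ k := by
  simpa [mkAlgHom_ι] using RingQuot.mkAlgHom_rel k (QuiverRel.delta_src (k := k))
theorem qδ_mul_qi : qδ k * qi k = qδ k := by
  simpa [mkAlgHom_ι] using RingQuot.mkAlgHom_rel k (QuiverRel.delta_tgt (k := k))
theorem qδ_mul_qδ : qδ k * qδ k = qα k * qβ k := by
  simpa [mkAlgHom_ι] using RingQuot.mkAlgHom_rel k (QuiverRel.delta_sq (k := k))
theorem qγ_mul_qγ_mul_qγ : qγ k * qγ k * qγ k = qα k * qβ k := by
  simpa [mkAlgHom_ι, mul_assoc] using RingQuot.mkAlgHom_rel k (QuiverRel.gamma_cube (k := k))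
theorem qδ_mul_qγ : qδ k * qγ k = 0 := by
  simpa [mkAlgHom_ι] using RingQuot.mkAlgHom_rel k (QuiverRel.delta_gamma (k := k))
theorem qγ_mul_qδ : qγ k * qδ k = 0 := by
  simpa [mkAlgHom_ι] using RingQuot.mkAlgHom_rel k (QuiverRel.gamma_delta (k := k))
theorem qδ_mul_qα : qδ k * qα k = 0 := by
  simpa [mkAlgHom_ι] using RingQuot.mkAlgHom_rel k (QuiverRel.delta_alpha (k := k))
theorem qγ_mul_qα : qγ k * qα k = 0 := by
  simpa [mkAlgHom_ι] using RingQuot.mkAlgHom_rel k (QuiverRel.gamma_alpha (k := k))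
theorem qβ_mul_qδ : qβ k * qδ k = 0 := by
  simpa [mkAlgHom_ι] using RingQuot.mkAlgHom_rel k (QuiverRel.beta_delta (k := k))
theorem qβ_mul_qγ : qβ k * qγ k = 0 := by
  simpa [mkAlgHom_ι] using RingQuot.mkAlgHom_rel k (QuiverRel.beta_gamma (k := k))

theorem qα_mul_qi : qα k * qi k = 0 :=
  mul_eq_zero_of_mul_eq_self_left (qα_mul_qj k) (qj_mul_qi k)
theorem qj_mul_qα : qj k * qα k = 0 :=
  mul_eq_zero_of_mul_eq_self_right (qi_mul_qα k) (qj_mul_qi k)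
theorem qi_mul_qβ : qi k * qβ k = 0 :=
  mul_eq_zero_of_mul_eq_self_right (qj_mul_qβ k) (qi_mul_qj k)
theorem qβ_mul_qj : qβ k * qj k = 0 :=
  mul_eq_zero_of_mul_eq_self_left (qβ_mul_qi k) (qi_mul_qj k)
theorem qj_mul_qγ : qj k * qγ k = 0 :=
  mul_eq_zero_of_mul_eq_self_right (qi_mul_qγ k) (qj_mul_qi k)
theorem qγ_mul_qj : qγ k * qj k = 0 :=
  mul_eq_zero_of_mul_eq_self_left (qγ_mul_qi k) (qi_mul_qj k)
theorem qj_mul_qδ : qj k * qδ k = 0 :=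
  mul_eq_zero_of_mul_eq_self_right (qi_mul_qδ k) (qj_mul_qi k)
theorem qδ_mul_qj : qδ k * qj k = 0 :=
  mul_eq_zero_of_mul_eq_self_left (qδ_mul_qi k) (qi_mul_qj k)
theorem qα_mul_qα : qα k * qα k = 0 :=
  mul_eq_zero_of_mul_eq_self_left (qα_mul_qj k) (qj_mul_qα k)
theorem qα_mul_qγ : qα k * qγ k = 0 :=
  mul_eq_zero_of_mul_eq_self_left (qα_mul_qj k) (qj_mul_qγ k)
theorem qα_mul_qδ : qα k * qδ k = 0 :=
  mul_eq_zero_of_mul_eq_self_left (qα_mul_qj k) (qj_mul_qδ k)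
theorem qβ_mul_qβ : qβ k * qβ k = 0 :=
  mul_eq_zero_of_mul_eq_self_left (qβ_mul_qi k) (qi_mul_qβ k)
theorem qγ_mul_qβ : qγ k * qβ k = 0 :=
  mul_eq_zero_of_mul_eq_self_left (qγ_mul_qi k) (qi_mul_qβ k)
theorem qδ_mul_qβ : qδ k * qβ k = 0 :=
  mul_eq_zero_of_mul_eq_self_left (qδ_mul_qi k) (qi_mul_qβ k)

theorem qα_mul_qβ_mul_qα : qα k * qβ k * qα k = 0 := by
  rw [← qδ_mul_qδ, mul_assoc, qδ_mul_qα, mul_zero]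

theorem qβ_mul_qα_mul_qβ : qβ k * qα k * qβ k = 0 := by
  rw [mul_assoc, ← qδ_mul_qδ, ← mul_assoc, qβ_mul_qδ, zero_mul]

theorem range_qbasisVec : Set.range (qbasisVec k) =
    {qi k, qj k, qα k, qβ k, qβ k * qα k, qγ k, qγ k * qγ k, qδ k, qα k * qβ k} := by
  simp only [qbasisVec, Matrix.range_cons, Matrix.range_empty, Set.union_empty,
    Set.singleton_union, pow_two, qδ_mul_qδ]

theorem gen_mul_mem_span_range_qbasisVec {g y : QuiverAlg k}
    (hg : g ∈ ({qi k, qj k, qα k, qβ k, qγ k, qδ k} : Set (QuiverAlg k)))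
    (hy : y ∈ Submodule.span k (Set.range (qbasisVec k))) :
    g * y ∈ Submodule.span k (Set.range (qbasisVec k)) := by
  rw [range_qbasisVec] at *
  refine (Submodule.span_le (p := (Submodule.span k _).comap (LinearMap.mulLeft k g))).2 ?_ hy
  intro t ht
  simp only [Set.mem_insert_iff, Set.mem_singleton_iff] at hg ht
  simp only [SetLike.mem_coe, Submodule.mem_comap, LinearMap.mulLeft_apply]
  rcases hg with rfl | rfl | rfl | rfl | rfl | rfl <;>
    rcases ht with rfl | rfl | rfl | rfl | rfl | rfl | rfl | rfl | rfl <;>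
    -- left-associated, every product reduces by two-letter relations, except `αβα` and `βαβ`
    (try simp only [← mul_assoc,
      qi_mul_qi, qj_mul_qj, qi_mul_qj, qj_mul_qi, qi_mul_qα, qα_mul_qj, qj_mul_qβ, qβ_mul_qi,
      qi_mul_qγ, qγ_mul_qi, qi_mul_qδ, qδ_mul_qi, qδ_mul_qδ, qγ_mul_qγ_mul_qγ, qδ_mul_qγ,
      qγ_mul_qδ, qδ_mul_qα, qγ_mul_qα, qβ_mul_qδ, qβ_mul_qγ, qα_mul_qi, qj_mul_qα, qi_mul_qβ,
      qβ_mul_qj, qj_mul_qγ, qγ_mul_qj, qj_mul_qδ, qδ_mul_qj, qα_mul_qα, qα_mul_qγ, qα_mul_qδ,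
      qβ_mul_qβ, qγ_mul_qβ, qδ_mul_qβ, qα_mul_qβ_mul_qα, qβ_mul_qα_mul_qβ, zero_mul]) <;>
    first
    | exact zero_mem _
    | exact Submodule.subset_span
        (by simp only [Set.mem_insert_iff, Set.mem_singleton_iff, true_or, or_true])

theorem span_range_qbasisVec : Submodule.span k (Set.range (qbasisVec k)) = ⊤ := by
  have hmul : ∀ x : FreeAlgebra k (Fin 6), ∀ y ∈ Submodule.span k (Set.range (qbasisVec k)),
      RingQuot.mkAlgHom k (QuiverRel k) x * y ∈ Submodule.span k (Set.range (qbasisVec k)) := by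
    intro x
    induction x using FreeAlgebra.induction with
    | grade0 r =>
      intro y hy
      simpa [Algebra.algebraMap_eq_smul_one] using Submodule.smul_mem _ r hy
    | grade1 g =>
      intro y hy
      refine gen_mul_mem_span_range_qbasisVec k ?_ hy
      fin_cases g <;> simp [mkAlgHom_ι]
    | mul a b ha hb => intro y hy; simpa [mul_assoc] using ha _ (hb y hy)
    | add a b ha hb => intro y hy; simpa [add_mul] using add_mem (ha y hy) (hb y hy)
  have hone : (1 : QuiverAlg k) ∈ Submodule.span k (Set.range (qbasisVec k)) := by
    rw [← qi_add_qj]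
    exact add_mem (Submodule.subset_span ⟨0, rfl⟩) (Submodule.subset_span ⟨1, rfl⟩)
  refine eq_top_iff.2 fun z _ => ?_
  obtain ⟨x, rfl⟩ := RingQuot.mkAlgHom_surjective k (QuiverRel k) z
  simpa using hmul x 1 hone

/-- Left multiplication by the six generators in the basis `qbasisVec`: entry `(r, c)` is the
coefficient of `qbasisVec r` in `generator * qbasisVec c`. -/
def genMat : Fin 6 → Matrix (Fin 9) (Fin 9) ℕ
  | 0 => Matrix.diagonal ![1, 0, 1, 0, 0, 1, 1, 1, 1]
  | 1 => Matrix.diagonal ![0, 1, 0, 1, 1, 0, 0, 0, 0]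
  | 2 => fun r c => if (r, c) = (2, 1) ∨ (r, c) = (8, 3) then 1 else 0
  | 3 => fun r c => if (r, c) = (3, 0) ∨ (r, c) = (4, 2) then 1 else 0
  | 4 => fun r c => if (r, c) = (5, 0) ∨ (r, c) = (6, 5) ∨ (r, c) = (8, 6) then 1 else 0
  | 5 => fun r c => if (r, c) = (7, 0) ∨ (r, c) = (8, 7) then 1 else 0

def basisMat : Fin 9 → Matrix (Fin 9) (Fin 9) ℕ :=
  ![genMat 0, genMat 1, genMat 2, genMat 3, genMat 3 * genMat 2, genMat 4, genMat 4 ^ 2,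
    genMat 5, genMat 5 ^ 2]

theorem lift_genMat_eq_of_rel {x y : FreeAlgebra k (Fin 6)} (h : QuiverRel k x y) :
    FreeAlgebra.lift k (fun n => (Nat.castRingHom k).mapMatrix (genMat n)) x =
      FreeAlgebra.lift k (fun n => (Nat.castRingHom k).mapMatrix (genMat n)) y := by
  induction h <;>
    simp only [map_mul, map_add, map_one, map_zero, FreeAlgebra.lift_ι_apply] <;>
    simp only [← map_mul ((Nat.castRingHom k).mapMatrix), ← map_add ((Nat.castRingHom k).mapMatrix),
      ← map_one ((Nat.castRingHom k).mapMatrix), ← map_zero ((Nat.castRingHom k).mapMatrix)] <;>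
    exact congrArg _ (by decide)

noncomputable def regularRep : QuiverAlg k →ₐ[k] Matrix (Fin 9) (Fin 9) k :=
  RingQuot.liftAlgHom k ⟨_, fun _ _ => lift_genMat_eq_of_rel k⟩

theorem regularRep_mk (x : FreeAlgebra k (Fin 6)) :
    regularRep k (RingQuot.mkAlgHom k (QuiverRel k) x) =
      FreeAlgebra.lift k (fun n => (Nat.castRingHom k).mapMatrix (genMat n)) x :=
  RingQuot.liftAlgHom_mkAlgHom_apply k _ _ x

theorem regularRep_qbasisVec (p : Fin 9) :
    regularRep k (qbasisVec k p) = (Nat.castRingHom k).mapMatrix (basisMat p) := by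
  fin_cases p <;>
    simp only [qbasisVec, basisMat, qi, qj, qα, qβ, qγ, qδ, Fin.zero_eta, Fin.mk_one,
      Fin.reduceFinMk, Matrix.cons_val, map_mul, map_pow, regularRep_mk, FreeAlgebra.lift_ι_apply]

/-- The coordinate vector of `1 = e_i + e_j`. -/
def oneVec : Fin 9 → ℕ := ![1, 1, 0, 0, 0, 0, 0, 0, 0]

/-- Coordinates in the basis `qbasisVec`, read off as `x * 1` in the regular representation. -/
noncomputable def coord : QuiverAlg k →ₗ[k] Fin 9 → k where
  toFun x := regularRep k x *ᵥ fun c => (oneVec c : k)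
  map_add' x y := by simp [Matrix.add_mulVec]
  map_smul' c x := by simp [Matrix.smul_mulVec]

theorem coord_mul (x y : QuiverAlg k) : coord k (x * y) = regularRep k x *ᵥ coord k y := by
  simp [coord, Matrix.mulVec_mulVec]

theorem coord_qbasisVec (p : Fin 9) : coord k (qbasisVec k p) = Pi.single p 1 := by
  have h : basisMat p *ᵥ oneVec = Pi.single p 1 := by revert p; decide
  ext r
  change ((regularRep k (qbasisVec k p)) *ᵥ (Nat.castRingHom k ∘ oneVec)) r = _
  rw [regularRep_qbasisVec, RingHom.mapMatrix_apply, ← RingHom.map_mulVec, h]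
  by_cases hr : r = p <;> simp [hr]

theorem linearIndependent_qbasisVec : LinearIndependent k (qbasisVec k) := by
  refine LinearIndependent.of_comp (coord k) ?_
  have : coord k ∘ qbasisVec k = Pi.basisFun k (Fin 9) := by
    ext p : 1
    simp [coord_qbasisVec]
  rw [this]
  exact (Pi.basisFun k (Fin 9)).linearIndependent

noncomputable def qbasis : Module.Basis (Fin 9) k (QuiverAlg k) :=
  .mk (linearIndependent_qbasisVec k) (span_range_qbasisVec k).ge

theorem qbasis_apply (p : Fin 9) : qbasis k p = qbasisVec k p := Module.Basis.mk_apply _ _ p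

theorem qbasis_equivFun : (qbasis k).equivFun.toLinearMap = coord k := by
  refine (qbasis k).ext fun q => funext fun r => ?_
  rw [LinearEquiv.coe_coe, Module.Basis.equivFun_self, qbasis_apply, coord_qbasisVec,
    Pi.single_apply]
  exact if_congr eq_comm rfl rfl

theorem qbasis_repr_apply (x : QuiverAlg k) (p : Fin 9) : (qbasis k).repr x p = coord k x p := by
  rw [← Module.Basis.equivFun_apply, ← LinearEquiv.coe_coe, qbasis_equivFun]

theorem regularRep_eq_sum (x : QuiverAlg k) :
    regularRep k x = ∑ p, coord k x p • (Nat.castRingHom k).mapMatrix (basisMat p) := by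
  conv_lhs => rw [← (qbasis k).sum_equivFun x]
  simp [← qbasis_equivFun, qbasis_apply, regularRep_qbasisVec]

theorem coord_mul_apply (x y : QuiverAlg k) (r : Fin 9) :
    coord k (x * y) r = ∑ p, ∑ q, coord k x p * coord k y q * basisMat p r q := by
  simp only [coord_mul, regularRep_eq_sum, Matrix.mulVec, dotProduct, Matrix.sum_apply,
    Matrix.smul_apply, RingHom.mapMatrix_apply, Matrix.map_apply, Finset.sum_mul]
  rw [Finset.sum_comm]
  simp [mul_comm, mul_left_comm]

theorem coord_qbasisVec_mul (p r : Fin 9) (a : QuiverAlg k) :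
    coord k (qbasisVec k p * a) r = ∑ q, coord k a q * basisMat p r q := by
  simp [coord_mul_apply, coord_qbasisVec, Pi.single_apply]

noncomputable def bspan (s : Finset (Fin 9)) : Submodule k (QuiverAlg k) :=
  Submodule.span k (qbasisVec k '' s)

theorem mem_bspan_iff {s : Finset (Fin 9)} {x : QuiverAlg k} :
    x ∈ bspan k s ↔ ∀ r ∉ s, coord k x r = 0 := by
  have : qbasisVec k = qbasis k := funext fun p => (qbasis_apply k p).symm
  rw [bspan, this, Module.Basis.mem_span_image]
  simp only [Set.subset_def, Finset.mem_coe, Finsupp.mem_support_iff, qbasis_repr_apply]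
  exact forall_congr' fun r => not_imp_comm

theorem qbasisVec_mem_bspan {s : Finset (Fin 9)} {p : Fin 9} (hp : p ∈ s) :
    qbasisVec k p ∈ bspan k s :=
  Submodule.subset_span ⟨p, hp, rfl⟩

theorem bspan_empty : bspan k ∅ = ⊥ := by simp [bspan]

theorem bspan_univ : bspan k Finset.univ = ⊤ := by
  rw [bspan, Finset.coe_univ, Set.image_univ, span_range_qbasisVec]

theorem mul_mem_bspan {s t u : Finset (Fin 9)} (h : ∀ p ∈ s, ∀ q ∈ t, ∀ r ∉ u, basisMat p r q = 0)
    {x y : QuiverAlg k} (hx : x ∈ bspan k s) (hy : y ∈ bspan k t) : x * y ∈ bspan k u := by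
  rw [mem_bspan_iff] at *
  intro r hr
  rw [coord_mul_apply]
  refine Finset.sum_eq_zero fun p _ => Finset.sum_eq_zero fun q _ => ?_
  by_cases hp : p ∈ s
  · by_cases hq : q ∈ t
    · simp [h p hp q hq r hr]
    · simp [hy q hq]
  · simp [hx p hp]

/-- The projection of `A` onto its semisimple quotient `k × k`, one factor per vertex. -/
noncomputable def toVertices : QuiverAlg k →ₐ[k] k × k :=
  RingQuot.liftAlgHom k ⟨FreeAlgebra.lift k ![(1, 0), (0, 1), 0, 0, 0, 0], by
    rintro _ _ ⟨⟩ <;> simp⟩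

theorem toVertices_apply (x : QuiverAlg k) : toVertices k x = (coord k x 0, coord k x 1) := by
  have : (toVertices k).toLinearMap =
      (LinearMap.proj 0 ∘ₗ coord k).prod (LinearMap.proj 1 ∘ₗ coord k) := by
    refine (qbasis k).ext fun p => ?_
    simp only [qbasis_apply, AlgHom.toLinearMap_apply, LinearMap.prod_apply, Function.prod,
      LinearMap.comp_apply, LinearMap.proj_apply, coord_qbasisVec]
    fin_cases p <;> simp [qbasisVec, toVertices, qi, qj, qα, qβ, qγ, qδ, Prod.mk_zero_zero]
  exact congr($this x)

/-- The basis vectors that are paths of positive length. -/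
def radIdx : Finset (Fin 9) := {2, 3, 4, 5, 6, 7, 8}

theorem isNilpotent_of_mem_bspan_radIdx {z : QuiverAlg k} (hz : z ∈ bspan k radIdx) :
    IsNilpotent z := by
  have h2 : z * z ∈ bspan k {4, 6, 8} := mul_mem_bspan k (by decide) hz hz
  have h4 : z * z * (z * z) ∈ bspan k ∅ := mul_mem_bspan k (by decide) h2 h2
  rw [bspan_empty, Submodule.mem_bot] at h4
  exact ⟨4, by rw [← h4]; noncomm_ring⟩

theorem mem_jacobson_bot_iff {x : QuiverAlg k} :
    x ∈ Ideal.jacobson (⊥ : Ideal (QuiverAlg k)) ↔ x ∈ bspan k radIdx := by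
  constructor
  · intro hx
    have h0 := ((AlgHom.fst k k k).comp (toVertices k)).jacobson_bot_le_ker hx
    have h1 := ((AlgHom.snd k k k).comp (toVertices k)).jacobson_bot_le_ker hx
    simp only [RingHom.mem_ker, AlgHom.comp_apply, toVertices_apply, AlgHom.fst_apply,
      AlgHom.snd_apply] at h0 h1
    rw [mem_bspan_iff]
    intro r hr
    fin_cases r <;> first | assumption | exact absurd (by decide) hr
  · intro hx
    refine Ideal.mem_jacobson_bot_of_forall_isNilpotent_mul fun y =>
      isNilpotent_of_mem_bspan_radIdx k ?_
    exact mul_mem_bspan k (s := Finset.univ) (by decide) (bspan_univ k ▸ Submodule.mem_top) hx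

theorem qbasisVec_mem_qsoc {p : Fin 9} (hp : p ∈ ({4, 8} : Finset (Fin 9))) :
    qbasisVec k p ∈ qsoc k := by
  intro x hx
  have := mul_mem_bspan k (u := ∅) (by decide) ((mem_jacobson_bot_iff k).1 hx)
    (qbasisVec_mem_bspan k hp)
  rwa [bspan_empty, Submodule.mem_bot] at this

/-- `hrow` says that `qbasisVec p * a` has the `r`-th coordinate of `a` at position `r'`. -/
theorem coord_eq_zero_of_mem_qsoc {a : QuiverAlg k} (ha : a ∈ qsoc k) {p r' r : Fin 9}
    (hp : p ∈ radIdx) (hrow : ∀ q, basisMat p r' q = if q = r then 1 else 0) :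
    coord k a r = 0 := by
  have hpa : qbasisVec k p * a = 0 :=
    ha _ ((mem_jacobson_bot_iff k).2 (qbasisVec_mem_bspan k hp))
  simpa [coord_qbasisVec_mul, hrow] using congrFun (congrArg (coord k) hpa) r'

theorem qsoc_le_bspan : qsoc k ≤ bspan k {4, 8} := by
  intro a ha
  rw [mem_bspan_iff]
  intro r hr
  fin_cases r
  · exact coord_eq_zero_of_mem_qsoc k ha (p := 3) (r' := 3) (by decide) (by decide)
  · exact coord_eq_zero_of_mem_qsoc k ha (p := 2) (r' := 2) (by decide) (by decide)
  · exact coord_eq_zero_of_mem_qsoc k ha (p := 3) (r' := 4) (by decide) (by decide)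
  · exact coord_eq_zero_of_mem_qsoc k ha (p := 2) (r' := 8) (by decide) (by decide)
  · exact absurd (by decide) hr
  · exact coord_eq_zero_of_mem_qsoc k ha (p := 5) (r' := 6) (by decide) (by decide)
  · exact coord_eq_zero_of_mem_qsoc k ha (p := 5) (r' := 8) (by decide) (by decide)
  · exact coord_eq_zero_of_mem_qsoc k ha (p := 7) (r' := 8) (by decide) (by decide)
  · exact absurd (by decide) hr

theorem qsoc_eq_bspan : qsoc k = bspan k {4, 8} :=
  le_antisymm (qsoc_le_bspan k) <| Submodule.span_le.2 <| by
    rintro _ ⟨p, hp, rfl⟩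
    exact qbasisVec_mem_qsoc k hp

end QuiverAlg

/-- The socle of the quiver algebra `A` has `k`-basis `{αβ, βα}`. -/
theorem stmt_7 :
    ∃ b : Module.Basis (Fin 2) k ↥(qsoc k),
      (b 0 : QuiverAlg k) = qα k * qβ k ∧ (b 1 : QuiverAlg k) = qβ k * qα k := by
  have hv : ![qα k * qβ k, qβ k * qα k] = qbasisVec k ∘ ![8, 4] := by
    ext i
    fin_cases i <;> simp [qbasisVec, pow_two, QuiverAlg.qδ_mul_qδ]
  have hli : LinearIndependent k ![qα k * qβ k, qβ k * qα k] := by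
    rw [hv]
    exact (QuiverAlg.linearIndependent_qbasisVec k).comp _ (by decide)
  have hspan : Submodule.span k (Set.range ![qα k * qβ k, qβ k * qα k]) = qsoc k := by
    rw [QuiverAlg.qsoc_eq_bspan, QuiverAlg.bspan, hv, Set.range_comp, Matrix.range_cons,
      Matrix.range_cons, Matrix.range_empty]
    simp [Set.pair_comm]
  exact ⟨(Module.Basis.span hli).map (LinearEquiv.ofEq _ _ hspan),
    by simp [Module.Basis.span_apply], by simp [Module.Basis.span_apply]⟩
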